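/- Per-iteration descent inequality for momentum Frank–Wolfe: for every t ≥ 0, f(z_{t+1}) ≤ f(z_t) + 4Lη²D² − η G(z_t) + 2ηD ‖∇f(z_t) − v_t‖ + (ηD/(t+2)) ∑_{i=0}^{t−1} θ_i ‖∇f(z_i) − v_i‖. -/

import Mathlib

/-!
Write `e t = x t - z t`. One step moves `z` by `(1 + α θ) η (w - z) + α (1 - γ) e` and
sends `e` to `(1 - α) ((1 - γ) e + θ η (w - z))`, with `α, θ, γ` taken at `t + 1, t, t`;
so by induction `‖e t‖ ≤ η D / 2` and every step of `z` has length at most `3/2 η D`.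
In the descent lemma the first-order term then splits into a Frank–Wolfe part, controlled
through the optimality of `w t` for `v t` by `2 η D ‖∇f(z t) - v t‖ - η G(z t)`, and a
momentum part `⟪∇f(z t), e t⟫`. Since `(t + 2) (1 - α (t + 1)) = t + 1`, the weighted
quantity `(t + 1) ⟪∇f(z t), e t⟫` obeys a contracting recursion whose error terms are the past
oracle errors `‖∇f(z i) - v i‖` and the gradient drift `L ‖z (i + 1) - z i‖ ‖e (i + 1)‖`;
summing it bounds the momentum part.
-/

open scoped RealInnerProductSpace

/-- The Frank–Wolfe (duality) gap of `f` over `X` at `x`: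
`G(x) = sup_{w ∈ X} ⟪w − x, −∇f(x)⟫`. -/
noncomputable def fwGap {d : ℕ} (f : EuclideanSpace ℝ (Fin d) → ℝ)
    (X : Set (EuclideanSpace ℝ (Fin d))) (x : EuclideanSpace ℝ (Fin d)) : ℝ :=
  sSup ((fun w => ⟪w - x, -gradient f x⟫) '' X)

open Finset

theorem mul_le_of_le_one_of_le_of_nonneg {α : Type*} [MulOneClass α] [Zero α] [Preorder α]
    [PosMulMono α] [MulPosMono α] {a b c : α} (ha : 0 ≤ a) (ha1 : a ≤ 1) (hbc : b ≤ c)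
    (hc : 0 ≤ c) : a * b ≤ c :=
  (mul_le_mul_of_nonneg_left hbc ha).trans (mul_le_of_le_one_left hc ha1)

theorem norm_smul_add_smul_le_of_le {F : Type*} [SeminormedAddCommGroup F] [NormedSpace ℝ F]
    {a b U V : ℝ} {u v : F} (ha : 0 ≤ a) (hb : 0 ≤ b)
    (hu : ‖u‖ ≤ U) (hv : ‖v‖ ≤ V) : ‖a • u + b • v‖ ≤ a * U + b * V :=
  calc ‖a • u + b • v‖ ≤ a * ‖u‖ + b * ‖v‖ := by
        simpa only [norm_smul_of_nonneg ha, norm_smul_of_nonneg hb] using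
          norm_add_le (a • u) (b • v)
    _ ≤ a * U + b * V := by gcongr

variable {E : Type*} [NormedAddCommGroup E] [InnerProductSpace ℝ E]

theorem le_add_inner_gradient_add_mul_norm_sq [CompleteSpace E] {f : E → ℝ} {L : ℝ}
    (hL : 0 ≤ L) (hf : Differentiable ℝ f)
    (hLip : ∀ u v, ‖gradient f u - gradient f v‖ ≤ L * ‖u - v‖) (a b : E) :
    f b ≤ f a + ⟪gradient f a, b - a⟫ + L * ‖b - a‖ ^ 2 := by
  let φ := InnerProductSpace.toDual ℝ E
  have hderiv : ∀ p, HasFDerivAt (fun q => f q - ⟪gradient f a, q⟫)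
      (φ (gradient f p - gradient f a)) p := fun p => by
    rw [map_sub]
    exact (hf p).hasGradientAt.hasFDerivAt.sub (φ (gradient f a)).hasFDerivAt
  have hbound : ∀ p ∈ segment ℝ a b, ‖φ (gradient f p - gradient f a)‖ ≤ L * ‖b - a‖ := by
    rintro _ ⟨s, r, hs, hr, hsr, rfl⟩
    obtain rfl : s = 1 - r := by linarith
    rw [φ.norm_map]
    calc _ ≤ L * ‖(1 - r) • a + r • b - a‖ := hLip _ _
      _ = r * (L * ‖b - a‖) := by
        rw [show (1 - r) • a + r • b - a = r • (b - a) by module,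
          norm_smul_of_nonneg hr]
        ring
      _ ≤ L * ‖b - a‖ := mul_le_of_le_one_left (by positivity) (by linarith)
  have hmvt := Convex.norm_image_sub_le_of_norm_hasFDerivWithin_le
    (fun p _ => (hderiv p).hasFDerivWithinAt) hbound (convex_segment a b)
    (left_mem_segment ℝ a b) (right_mem_segment ℝ a b)
  rw [Real.norm_eq_abs, abs_le] at hmvt
  rw [inner_sub_right, sq]
  linarith [hmvt.2]

theorem inner_sub_le_of_isMaxOn {X : Set E} {v w u g : E} {D : ℝ}
    (hw : IsMaxOn (fun u => ⟪u, -v⟫) X w) (hu : u ∈ X) (hwu : ‖w - u‖ ≤ D) :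
    ⟪g, w - u⟫ ≤ D * ‖g - v‖ := by
  have hopt : ⟪v, w - u⟫ ≤ 0 := by
    have := isMaxOn_iff.mp hw u hu
    simp only [inner_neg_right] at this
    rw [inner_sub_right, real_inner_comm w v, real_inner_comm u v]
    linarith
  calc ⟪g, w - u⟫ = ⟪g - v, w - u⟫ + ⟪v, w - u⟫ := by rw [inner_sub_left]; ring
    _ ≤ ‖g - v‖ * ‖w - u‖ + 0 := add_le_add (real_inner_le_norm _ _) hopt
    _ ≤ D * ‖g - v‖ := by rw [add_zero, mul_comm]; gcongr

section FrankWolfeGap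

variable {d : ℕ} {f : EuclideanSpace ℝ (Fin d) → ℝ} {X : Set (EuclideanSpace ℝ (Fin d))}
  {z : EuclideanSpace ℝ (Fin d)}

theorem fwGap_nonneg (hX : IsCompact X) (hz : z ∈ X) : 0 ≤ fwGap f X z :=
  le_csSup (hX.bddAbove_image (by fun_prop)) ⟨z, hz, by simp⟩

theorem fwGap_le_of_isMaxOn {D : ℝ} (hdiam : ∀ u ∈ X, ∀ u' ∈ X, ‖u - u'‖ ≤ D)
    {v w : EuclideanSpace ℝ (Fin d)} (hz : z ∈ X) (hwX : w ∈ X)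
    (hw : IsMaxOn (fun u => ⟪u, -v⟫) X w) :
    fwGap f X z ≤ D * ‖gradient f z - v‖ - ⟪gradient f z, w - z⟫ := by
  refine csSup_le ⟨_, z, hz, rfl⟩ ?_
  rintro _ ⟨u, hu, rfl⟩
  have hsplit : ⟪u - z, -gradient f z⟫ = ⟪gradient f z, w - u⟫ - ⟪gradient f z, w - z⟫ := by
    simp only [inner_sub_left, inner_sub_right, inner_neg_right, real_inner_comm]
    ring
  linarith [inner_sub_le_of_isMaxOn (g := gradient f z) hw hu (hdiam w hwX u hu)]

end FrankWolfeGap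

namespace MomentumFW

noncomputable section

def theta (t : ℕ) : ℝ := 1 / ((t + 1) * (t + 2))

/-- The paper's `α (t + 1)`. -/
def alphaSucc (t : ℕ) : ℝ := 1 / (t + 2)

def gamma (η : ℝ) (t : ℕ) : ℝ := (1 + theta t) * η

theorem theta_pos (t : ℕ) : 0 < theta t := by unfold theta; positivity

theorem theta_le_half (t : ℕ) : theta t ≤ 1 / 2 := by
  unfold theta
  gcongr
  nlinarith [(t.cast_nonneg : (0 : ℝ) ≤ t)]

theorem alphaSucc_pos (t : ℕ) : 0 < alphaSucc t := by unfold alphaSucc; positivity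

theorem alphaSucc_le_half (t : ℕ) : alphaSucc t ≤ 1 / 2 := by
  unfold alphaSucc
  gcongr
  linarith [(t.cast_nonneg : (0 : ℝ) ≤ t)]

theorem one_sub_alphaSucc_mul (t : ℕ) : (1 - alphaSucc t) * (t + 2) = t + 1 := by
  unfold alphaSucc
  field_simp
  ring

theorem succ_mul_theta (t : ℕ) : (t + 1) * theta t = alphaSucc t := by
  unfold theta alphaSucc
  field_simp

theorem one_sub_alphaSucc_mul_half_add_theta_le (t : ℕ) :
    (1 - alphaSucc t) * (1 / 2 + theta t) ≤ 1 / 2 := by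
  have ht : (0 : ℝ) ≤ t := t.cast_nonneg
  unfold alphaSucc theta
  field_simp
  nlinarith

theorem gamma_nonneg {η : ℝ} (hη : 0 ≤ η) (t : ℕ) : 0 ≤ gamma η t :=
  mul_nonneg (by linarith [theta_pos t]) hη

theorem gamma_le_one {η : ℝ} (hη : 0 ≤ η) (hη23 : η < 2 / 3) (t : ℕ) : gamma η t ≤ 1 := by
  unfold gamma
  nlinarith [theta_le_half t]

theorem theta_mul_alphaSucc_le {i t : ℕ} (hit : i < t) :
    theta t * alphaSucc i ≤ alphaSucc t * theta i := by
  have hle : (i : ℝ) + 1 ≤ t := by exact_mod_cast hit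
  unfold theta alphaSucc
  rw [div_mul_div_comm, div_mul_div_comm, one_mul]
  apply one_div_le_one_div_of_le (by positivity)
  nlinarith [mul_le_mul_of_nonneg_left hle (by positivity : (0 : ℝ) ≤ (t + 2) * (i + 2))]

theorem theta_mul_sum_le (t : ℕ) {a : ℕ → ℝ} (ha : ∀ i, 0 ≤ a i) :
    theta t * ∑ i ∈ range t, alphaSucc i * a i ≤ alphaSucc t * ∑ i ∈ range t, theta i * a i := by
  rw [mul_sum, mul_sum]
  refine sum_le_sum fun i hi => ?_
  calc theta t * (alphaSucc i * a i) = theta t * alphaSucc i * a i := by ring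
    _ ≤ alphaSucc t * theta i * a i :=
      mul_le_mul_of_nonneg_right (theta_mul_alphaSucc_le (mem_range.mp hi)) (ha i)
    _ = alphaSucc t * (theta i * a i) := by ring

end

end MomentumFW

open MomentumFW

structure IsMomentumFW (X : Set E) (η : ℝ) (x y z w v : ℕ → E) : Prop where
  x_zero : x 0 = z 0
  z_zero_mem : z 0 ∈ X
  w_mem : ∀ t, w t ∈ X
  w_isMaxOn : ∀ t, IsMaxOn (fun u => ⟪u, -v t⟫) X (w t)
  x_succ : ∀ t, x (t + 1) = x t + gamma η t • (w t - x t)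
  y_succ : ∀ t, y (t + 1) = z t + η • (w t - z t)
  z_succ : ∀ t, z (t + 1) = (1 - alphaSucc t) • y (t + 1) + alphaSucc t • x (t + 1)

namespace IsMomentumFW

variable {X : Set E} {η D : ℝ} {x y z w v : ℕ → E}

theorem z_succ_sub (h : IsMomentumFW X η x y z w v) (t : ℕ) :
    z (t + 1) - z t = ((1 + alphaSucc t * theta t) * η) • (w t - z t)
      + (alphaSucc t * (1 - gamma η t)) • (x t - z t) := by
  rw [h.z_succ, h.y_succ, h.x_succ]
  unfold gamma
  module

theorem x_succ_sub_z_succ (h : IsMomentumFW X η x y z w v) (t : ℕ) :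
    x (t + 1) - z (t + 1)
      = (1 - alphaSucc t) • ((1 - gamma η t) • (x t - z t) + (theta t * η) • (w t - z t)) := by
  rw [h.z_succ, h.y_succ, h.x_succ]
  unfold gamma
  module

theorem inner_z_succ_sub (h : IsMomentumFW X η x y z w v) (g : E) (t : ℕ) :
    ⟪g, z (t + 1) - z t⟫ = (1 + alphaSucc t * theta t) * η * ⟪g, w t - z t⟫
      + (1 - gamma η t) * theta t * ((t + 1) * ⟪g, x t - z t⟫) := by
  rw [h.z_succ_sub, inner_add_right, inner_smul_right, inner_smul_right]
  linear_combination (gamma η t - 1) * ⟪g, x t - z t⟫ * succ_mul_theta t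

theorem mem (h : IsMomentumFW X η x y z w v) (hX : Convex ℝ X) (hη : 0 ≤ η) (hη23 : η < 2 / 3)
    (t : ℕ) : x t ∈ X ∧ z t ∈ X := by
  induction t with
  | zero => exact ⟨h.x_zero ▸ h.z_zero_mem, h.z_zero_mem⟩
  | succ t ih =>
    have hx : x (t + 1) ∈ X := h.x_succ t ▸
      hX.add_smul_sub_mem ih.1 (h.w_mem t) ⟨gamma_nonneg hη t, gamma_le_one hη hη23 t⟩
    have hy : y (t + 1) ∈ X := h.y_succ t ▸
      hX.add_smul_sub_mem ih.2 (h.w_mem t) ⟨hη, by linarith⟩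
    exact ⟨hx, h.z_succ t ▸ hX hy hx (by linarith [alphaSucc_le_half t]) (alphaSucc_pos t).le
      (by ring)⟩

theorem norm_x_sub_z_le (h : IsMomentumFW X η x y z w v) (hX : Convex ℝ X) (hη : 0 ≤ η)
    (hη23 : η < 2 / 3) (hD : 0 ≤ D) (hdiam : ∀ u ∈ X, ∀ u' ∈ X, ‖u - u'‖ ≤ D) (t : ℕ) :
    ‖x t - z t‖ ≤ η * D / 2 := by
  induction t with
  | zero => simp [h.x_zero]; positivity
  | succ t ih =>
    have hwz := hdiam _ (h.w_mem t) _ (h.mem hX hη hη23 t).2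
    have hα : 0 ≤ 1 - alphaSucc t := by linarith [alphaSucc_le_half t]
    have hγ := gamma_le_one hη hη23 t
    rw [h.x_succ_sub_z_succ, norm_smul_of_nonneg hα]
    calc (1 - alphaSucc t) * ‖(1 - gamma η t) • (x t - z t) + (theta t * η) • (w t - z t)‖
        ≤ (1 - alphaSucc t) * ((1 - gamma η t) * (η * D / 2) + theta t * η * D) :=
          mul_le_mul_of_nonneg_left (norm_smul_add_smul_le_of_le (sub_nonneg.2 hγ)
            (mul_nonneg (theta_pos t).le hη) ih hwz) hα
      _ ≤ (1 - alphaSucc t) * (1 / 2 + theta t) * (η * D) := by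
          nlinarith [mul_nonneg (mul_nonneg hα (gamma_nonneg hη t)) (mul_nonneg hη hD)]
      _ ≤ η * D / 2 := by
          nlinarith [mul_le_mul_of_nonneg_right (one_sub_alphaSucc_mul_half_add_theta_le t)
            (mul_nonneg hη hD)]

theorem norm_z_succ_sub_le (h : IsMomentumFW X η x y z w v) (hX : Convex ℝ X) (hη : 0 ≤ η)
    (hη23 : η < 2 / 3) (hD : 0 ≤ D) (hdiam : ∀ u ∈ X, ∀ u' ∈ X, ‖u - u'‖ ≤ D) (t : ℕ) :
    ‖z (t + 1) - z t‖ ≤ 3 / 2 * (η * D) := by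
  have hαθ : alphaSucc t * theta t ≤ 1 / 4 := by
    nlinarith [alphaSucc_le_half t, theta_le_half t, alphaSucc_pos t, theta_pos t]
  have hαγ : alphaSucc t * (1 - gamma η t) ≤ 1 / 2 := by
    nlinarith [alphaSucc_le_half t, alphaSucc_pos t, gamma_nonneg hη t]
  have hηD : 0 ≤ η * D := mul_nonneg hη hD
  rw [h.z_succ_sub]
  calc _ ≤ (1 + alphaSucc t * theta t) * η * D + alphaSucc t * (1 - gamma η t) * (η * D / 2) :=
        norm_smul_add_smul_le_of_le
          (mul_nonneg (by nlinarith [alphaSucc_pos t, theta_pos t]) hη)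
          (mul_nonneg (alphaSucc_pos t).le (sub_nonneg.2 (gamma_le_one hη hη23 t)))
          (hdiam _ (h.w_mem t) _ (h.mem hX hη hη23 t).2) (h.norm_x_sub_z_le hX hη hη23 hD hdiam t)
    _ ≤ 3 / 2 * (η * D) := by
        nlinarith [mul_le_mul_of_nonneg_right hαθ hηD, mul_le_mul_of_nonneg_right hαγ hηD]

theorem succ_mul_inner_succ_le (h : IsMomentumFW X η x y z w v) (hX : Convex ℝ X)
    (hη : 0 ≤ η) (hη23 : η < 2 / 3) (hD : 0 ≤ D) (hdiam : ∀ u ∈ X, ∀ u' ∈ X, ‖u - u'‖ ≤ D)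
    {g : E → E} {L : ℝ} (hL : 0 ≤ L) (hg : ∀ u u', ‖g u - g u'‖ ≤ L * ‖u - u'‖) (t : ℕ) :
    (t + 2) * ⟪g (z (t + 1)), x (t + 1) - z (t + 1)⟫
      ≤ (1 - gamma η t) * ((t + 1) * ⟪g (z t), x t - z t⟫)
        + η * D * (alphaSucc t * ‖g (z t) - v t‖) + (t + 2) * (3 / 4 * (L * (η * D) ^ 2)) := by
  have hzt := (h.mem hX hη hη23 t).2
  have hcross : ⟪g (z (t + 1)) - g (z t), x (t + 1) - z (t + 1)⟫ ≤ 3 / 4 * (L * (η * D) ^ 2) :=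
    calc _ ≤ ‖g (z (t + 1)) - g (z t)‖ * ‖x (t + 1) - z (t + 1)‖ := real_inner_le_norm _ _
      _ ≤ (L * (3 / 2 * (η * D))) * (η * D / 2) := by
        gcongr
        · exact (hg _ _).trans (by gcongr; exact h.norm_z_succ_sub_le hX hη hη23 hD hdiam t)
        · exact h.norm_x_sub_z_le hX hη hη23 hD hdiam (t + 1)
      _ = 3 / 4 * (L * (η * D) ^ 2) := by ring
  have hlmo : ⟪g (z t), w t - z t⟫ ≤ D * ‖g (z t) - v t‖ :=
    inner_sub_le_of_isMaxOn (h.w_isMaxOn t) hzt (hdiam _ (h.w_mem t) _ hzt)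
  have hexpand : (t + 2) * ⟪g (z t), x (t + 1) - z (t + 1)⟫
      = (1 - gamma η t) * ((t + 1) * ⟪g (z t), x t - z t⟫)
        + η * alphaSucc t * ⟪g (z t), w t - z t⟫ := by
    rw [h.x_succ_sub_z_succ, inner_smul_right, inner_add_right, inner_smul_right,
      inner_smul_right]
    linear_combination ((1 - gamma η t) * ⟪g (z t), x t - z t⟫
        + theta t * η * ⟪g (z t), w t - z t⟫) * one_sub_alphaSucc_mul t
      + η * ⟪g (z t), w t - z t⟫ * succ_mul_theta t
  have hsplit : ⟪g (z (t + 1)), x (t + 1) - z (t + 1)⟫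
      = ⟪g (z t), x (t + 1) - z (t + 1)⟫ + ⟪g (z (t + 1)) - g (z t), x (t + 1) - z (t + 1)⟫ := by
    rw [inner_sub_left]; ring
  have ht : (0 : ℝ) ≤ t + 2 := by positivity
  have hηα : 0 ≤ η * alphaSucc t := mul_nonneg hη (alphaSucc_pos t).le
  nlinarith [mul_le_mul_of_nonneg_left hcross ht, mul_le_mul_of_nonneg_left hlmo hηα]

theorem succ_mul_inner_le (h : IsMomentumFW X η x y z w v) (hX : Convex ℝ X)
    (hη : 0 ≤ η) (hη23 : η < 2 / 3) (hD : 0 ≤ D) (hdiam : ∀ u ∈ X, ∀ u' ∈ X, ‖u - u'‖ ≤ D)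
    {g : E → E} {L : ℝ} (hL : 0 ≤ L) (hg : ∀ u u', ‖g u - g u'‖ ≤ L * ‖u - u'‖) (t : ℕ) :
    (t + 1) * ⟪g (z t), x t - z t⟫
      ≤ η * D * ∑ i ∈ range t, alphaSucc i * ‖g (z i) - v i‖
        + (t + 1) * (t + 2) * (L * (η * D) ^ 2) := by
  induction t with
  | zero => simp [h.x_zero]; positivity
  | succ t ih =>
    have hstep := h.succ_mul_inner_succ_le hX hη hη23 hD hdiam hL hg t
    have hsum : 0 ≤ ∑ i ∈ range t, alphaSucc i * ‖g (z i) - v i‖ :=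
      sum_nonneg fun i _ => mul_nonneg (alphaSucc_pos i).le (norm_nonneg _)
    have hcontract := mul_le_of_le_one_of_le_of_nonneg (sub_nonneg.2 (gamma_le_one hη hη23 t))
      (by linarith [gamma_nonneg hη t]) ih (by positivity)
    have hC : 0 ≤ (t + 2) * (L * (η * D) ^ 2) := by positivity
    push_cast
    rw [sum_range_succ]
    nlinarith

theorem momentum_term_le (h : IsMomentumFW X η x y z w v) (hX : Convex ℝ X)
    (hη : 0 ≤ η) (hη23 : η < 2 / 3) (hD : 0 ≤ D) (hdiam : ∀ u ∈ X, ∀ u' ∈ X, ‖u - u'‖ ≤ D)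
    {g : E → E} {L : ℝ} (hL : 0 ≤ L) (hg : ∀ u u', ‖g u - g u'‖ ≤ L * ‖u - u'‖) (t : ℕ) :
    (1 - gamma η t) * theta t * ((t + 1) * ⟪g (z t), x t - z t⟫)
      ≤ η * D * (alphaSucc t * ∑ i ∈ range t, theta i * ‖g (z i) - v i‖) + L * (η * D) ^ 2 := by
  have hsum : 0 ≤ ∑ i ∈ range t, alphaSucc i * ‖g (z i) - v i‖ :=
    sum_nonneg fun i _ => mul_nonneg (alphaSucc_pos i).le (norm_nonneg _)
  have hθ : theta t * ((t + 1) * (t + 2)) = 1 := by unfold theta; field_simp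
  calc _ = theta t * ((1 - gamma η t) * ((t + 1) * ⟪g (z t), x t - z t⟫)) := by ring
    _ ≤ theta t * (η * D * ∑ i ∈ range t, alphaSucc i * ‖g (z i) - v i‖
          + (t + 1) * (t + 2) * (L * (η * D) ^ 2)) :=
        mul_le_mul_of_nonneg_left (mul_le_of_le_one_of_le_of_nonneg
          (sub_nonneg.2 (gamma_le_one hη hη23 t)) (by linarith [gamma_nonneg hη t])
          (h.succ_mul_inner_le hX hη hη23 hD hdiam hL hg t) (by positivity)) (theta_pos t).le
    _ = η * D * (theta t * ∑ i ∈ range t, alphaSucc i * ‖g (z i) - v i‖) + L * (η * D) ^ 2 := by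
        linear_combination L * (η * D) ^ 2 * hθ
    _ ≤ _ := by
        gcongr ?_ + _
        exact mul_le_mul_of_nonneg_left (theta_mul_sum_le t fun i => norm_nonneg (g (z i) - v i))
          (mul_nonneg hη hD)

theorem fw_term_le {d : ℕ} {X : Set (EuclideanSpace ℝ (Fin d))}
    {x y z w v : ℕ → EuclideanSpace ℝ (Fin d)} (h : IsMomentumFW X η x y z w v)
    (hXc : IsCompact X) (hX : Convex ℝ X) (hη : 0 ≤ η) (hη23 : η < 2 / 3) (hD : 0 ≤ D)
    (hdiam : ∀ u ∈ X, ∀ u' ∈ X, ‖u - u'‖ ≤ D) (f : EuclideanSpace ℝ (Fin d) → ℝ) (t : ℕ) :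
    (1 + alphaSucc t * theta t) * η * ⟪gradient f (z t), w t - z t⟫
      ≤ 2 * η * D * ‖gradient f (z t) - v t‖ - η * fwGap f X (z t) := by
  have hzt := (h.mem hX hη hη23 t).2
  have hgap := fwGap_le_of_isMaxOn (f := f) hdiam hzt (h.w_mem t) (h.w_isMaxOn t)
  have hgap0 := fwGap_nonneg (f := f) hXc hzt
  have hαθ : 0 ≤ alphaSucc t * theta t := (mul_pos (alphaSucc_pos t) (theta_pos t)).le
  have hαθ1 : alphaSucc t * theta t ≤ 1 :=
    mul_le_one₀ ((alphaSucc_le_half t).trans (by norm_num)) (theta_pos t).le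
      ((theta_le_half t).trans (by norm_num))
  calc _ ≤ (1 + alphaSucc t * theta t) * η
        * (D * ‖gradient f (z t) - v t‖ - fwGap f X (z t)) :=
        mul_le_mul_of_nonneg_left (by linarith) (by positivity)
    _ ≤ 2 * η * D * ‖gradient f (z t) - v t‖ - η * fwGap f X (z t) := by
        nlinarith [mul_nonneg (mul_nonneg hαθ hη) hgap0,
          mul_nonneg (mul_nonneg (sub_nonneg.2 hαθ1) hη)
            (mul_nonneg hD (norm_nonneg (gradient f (z t) - v t)))]

end IsMomentumFW

theorem momentum_fw_descent_inequality_general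
    (d : ℕ)
    (X : Set (EuclideanSpace ℝ (Fin d)))
    (hXcomp : IsCompact X) (hXconv : Convex ℝ X)
    (D : ℝ) (hD : 0 < D)
    (hdiam : ∀ u ∈ X, ∀ v ∈ X, ‖u - v‖ ≤ D)
    (f : EuclideanSpace ℝ (Fin d) → ℝ)
    (L : ℝ) (hL : 0 < L)
    (hdiff : Differentiable ℝ f)
    (hLip : ∀ u v', ‖gradient f u - gradient f v'‖ ≤ L * ‖u - v'‖)
    (η : ℝ) (hη : 0 < η) (hη23 : η < 2 / 3)
    (x y z w v : ℕ → EuclideanSpace ℝ (Fin d))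
    (hx0 : x 0 = z 0) (hz0 : z 0 ∈ X)
    (hwX : ∀ t, w t ∈ X)
    (hwopt : ∀ t, ∀ w' ∈ X, ⟪w', -(v t)⟫ ≤ ⟪w t, -(v t)⟫)
    (hxrec : ∀ t : ℕ, x (t + 1)
      = x t + ((1 + 1 / (((t : ℝ) + 1) * ((t : ℝ) + 2))) * η) • (w t - x t))
    (hyrec : ∀ t : ℕ, y (t + 1) = z t + η • (w t - z t))
    (hzrec : ∀ t : ℕ, z (t + 1)
      = (1 - 1 / ((t : ℝ) + 2)) • y (t + 1) + (1 / ((t : ℝ) + 2)) • x (t + 1))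
    :
    ∀ t : ℕ, f (z (t + 1))
      ≤ f (z t) + 4 * L * η ^ 2 * D ^ 2 - η * fwGap f X (z t)
        + 2 * η * D * ‖gradient f (z t) - v t‖
        + (η * D / ((t : ℝ) + 2)) * ∑ i ∈ Finset.range t,
            (1 / (((i : ℝ) + 1) * ((i : ℝ) + 2))) * ‖gradient f (z i) - v i‖ := by
  have h : IsMomentumFW X η x y z w v :=
    ⟨hx0, hz0, hwX, fun t => isMaxOn_iff.mpr (hwopt t), hxrec, hyrec, hzrec⟩
  intro t
  have hdesc := le_add_inner_gradient_add_mul_norm_sq hL.le hdiff hLip (z t) (z (t + 1))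
  rw [h.inner_z_succ_sub] at hdesc
  have hfw := h.fw_term_le hXcomp hXconv hη.le hη23 hD.le hdiam f t
  have hmom := h.momentum_term_le hXconv hη.le hη23 hD.le hdiam hL.le hLip t
  have hquad : L * ‖z (t + 1) - z t‖ ^ 2 ≤ L * (3 / 2 * (η * D)) ^ 2 := by
    gcongr
    exact h.norm_z_succ_sub_le hXconv hη.le hη23 hD.le hdiam t
  have hα : η * D / ((t : ℝ) + 2) = η * D * alphaSucc t := by unfold alphaSucc; ring
  rw [hα]
  simp only [← theta.eq_1]
  nlinarith [mul_nonneg hL.le (sq_nonneg (η * D))]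

/-- Per-iteration descent inequality for momentum Frank–Wolfe. -/
theorem momentum_fw_descent_inequality
    (d : ℕ) (hd : 1 ≤ d)
    (X : Set (EuclideanSpace ℝ (Fin d))) (hXne : X.Nonempty)
    (hXcomp : IsCompact X) (hXconv : Convex ℝ X)
    (D : ℝ) (hD : 0 < D)
    (hdiam : ∀ u ∈ X, ∀ v ∈ X, ‖u - v‖ ≤ D)
    (f : EuclideanSpace ℝ (Fin d) → ℝ)
    (L : ℝ) (hL : 0 < L)
    (hdiff : Differentiable ℝ f)
    (hLip : ∀ u v', ‖gradient f u - gradient f v'‖ ≤ L * ‖u - v'‖)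
    (η : ℝ) (hη : 0 < η) (hη23 : η < 2 / 3)
    (x y z w v : ℕ → EuclideanSpace ℝ (Fin d))
    (hx0 : x 0 = z 0) (hy0 : y 0 = z 0) (hz0 : z 0 ∈ X)
    (hwX : ∀ t, w t ∈ X)
    (hwopt : ∀ t, ∀ w' ∈ X, ⟪w', -(v t)⟫ ≤ ⟪w t, -(v t)⟫)
    (hxrec : ∀ t : ℕ, x (t + 1)
      = x t + ((1 + 1 / (((t : ℝ) + 1) * ((t : ℝ) + 2))) * η) • (w t - x t))
    (hyrec : ∀ t : ℕ, y (t + 1) = z t + η • (w t - z t))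
    (hzrec : ∀ t : ℕ, z (t + 1)
      = (1 - 1 / ((t : ℝ) + 2)) • y (t + 1) + (1 / ((t : ℝ) + 2)) • x (t + 1))
    :
    ∀ t : ℕ, f (z (t + 1))
      ≤ f (z t) + 4 * L * η ^ 2 * D ^ 2 - η * fwGap f X (z t)
        + 2 * η * D * ‖gradient f (z t) - v t‖
        + (η * D / ((t : ℝ) + 2)) * ∑ i ∈ Finset.range t,
            (1 / (((i : ℝ) + 1) * ((i : ℝ) + 2))) * ‖gradient f (z i) - v i‖ :=
  momentum_fw_descent_inequality_general d X hXcomp hXconv D hD hdiam f L hL hdiff hLip η hη hη23 x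
    y z w v hx0 hz0 hwX hwopt hxrec hyrec hzrec
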